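/- Let f ∈ F[X] and x ∈ F with f'(x) ≠ 0 and α(f,x) := β(f,x)·γ(f,x) < 1. Then the Newton iterate x' := x - f(x)/f'(x) satisfies f'(x') ≠ 0, β(f,x') ≤ α(f,x)·β(f,x), γ(f,x') = γ(f,x), and hence α(f,x') ≤ α(f,x)^2. -/
import Mathlib


open Polynomial Filter

noncomputable def sbeta {F : Type*} [NormedField F] (f : F[X]) (x : F) : ℝ :=
  ‖f.eval x / f.derivative.eval x‖

noncomputable def sgamma {F : Type*} [NormedField F] (f : F[X]) (x : F) : ℝ :=
  ⨆ k : ℕ,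
    ‖((⇑(derivative (R := F)))^[k + 2] f).eval x /
        (((k + 2).factorial : F) * f.derivative.eval x)‖ ^ ((1 : ℝ) / (k + 1))

noncomputable def salpha {F : Type*} [NormedField F] (f : F[X]) (x : F) : ℝ :=
  sbeta f x * sgamma f x

noncomputable def newton {F : Type*} [NormedField F] (f : F[X]) (x : F) : F :=
  x - f.eval x / f.derivative.eval x

section Aux

open IsUltrametricDist

variable {F : Type*} [NormedField F] [IsUltrametricDist F]

/-- The `k`-th term in `sgamma`, rewritten with Hasse derivatives. -/
noncomputable def gterm (f : F[X]) (x : F) (k : ℕ) : ℝ :=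
  ‖(hasseDeriv (k + 2) f).eval x / f.derivative.eval x‖ ^ ((1 : ℝ) / (k + 1))

lemma sgamma_eq [CharZero F] (f : F[X]) (x : F) : sgamma f x = ⨆ k, gterm f x k := by
  unfold sgamma gterm
  congr 1
  funext k
  congr 2
  have hfac : ((⇑(derivative (R := F)))^[k + 2] f) =
      (k + 2).factorial • hasseDeriv (k + 2) f := by
    rw [← Polynomial.factorial_smul_hasseDeriv (k + 2)]
    simp
  rw [hfac]
  have hne : (((k + 2).factorial : F)) ≠ 0 :=
    Nat.cast_ne_zero.mpr (Nat.factorial_ne_zero _)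
  rw [show ((k + 2).factorial • hasseDeriv (k + 2) f).eval x
      = ((k + 2).factorial : F) * (hasseDeriv (k + 2) f).eval x by simp [nsmul_eq_mul]]
  rw [mul_div_mul_left _ _ hne]

lemma gterm_nonneg (f : F[X]) (x : F) (k : ℕ) : 0 ≤ gterm f x k :=
  Real.rpow_nonneg (norm_nonneg _) _

lemma sgamma_nonneg (f : F[X]) (x : F) : 0 ≤ sgamma f x :=
  Real.iSup_nonneg fun _ => Real.rpow_nonneg (norm_nonneg _) _

lemma gterm_bddAbove (f : F[X]) (x : F) : BddAbove (Set.range (gterm f x)) := by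
  have hsub : Set.range (gterm f x) ⊆
      ↑(insert (0 : ℝ) ((Finset.range f.natDegree).image (gterm f x))) := by
    rintro - ⟨k, rfl⟩
    by_cases hk : k < f.natDegree
    · exact Finset.mem_coe.mpr (Finset.mem_insert_of_mem
        (Finset.mem_image_of_mem _ (Finset.mem_range.mpr hk)))
    · have hz : hasseDeriv (k + 2) f = 0 :=
        f.hasseDeriv_eq_zero_of_lt_natDegree _ (by omega)
      have : gterm f x k = 0 := by
        unfold gterm
        rw [hz]
        simp only [Polynomial.eval_zero, zero_div, norm_zero]
        exact Real.zero_rpow (by positivity)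
      rw [this]
      exact Finset.mem_coe.mpr (Finset.mem_insert_self _ _)
  exact (Finset.bddAbove _).mono hsub

lemma gterm_le_sgamma [CharZero F] (f : F[X]) (x : F) (k : ℕ) :
    gterm f x k ≤ sgamma f x := by
  rw [sgamma_eq]
  exact le_ciSup (gterm_bddAbove f x) k

/-- Norm bound on Hasse derivatives from the definition of `sgamma`. -/
lemma hasse_le [CharZero F] (f : F[X]) (x : F) (k : ℕ) :
    ‖(hasseDeriv (k + 2) f).eval x / f.derivative.eval x‖ ≤ sgamma f x ^ (k + 1) := by
  set a := ‖(hasseDeriv (k + 2) f).eval x / f.derivative.eval x‖ with ha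
  have h := gterm_le_sgamma f x k
  have hck : ((k : ℝ) + 1) ≠ 0 := by positivity
  have key : a = (a ^ ((1 : ℝ) / (k + 1))) ^ (((k : ℕ) + 1 : ℕ) : ℝ) := by
    rw [← Real.rpow_mul (norm_nonneg _)]
    push_cast
    rw [one_div_mul_cancel hck, Real.rpow_one]
  calc a = (a ^ ((1 : ℝ) / (k + 1))) ^ (((k : ℕ) + 1 : ℕ) : ℝ) := key
    _ ≤ (sgamma f x) ^ (((k : ℕ) + 1 : ℕ) : ℝ) := by
        exact Real.rpow_le_rpow (Real.rpow_nonneg (norm_nonneg _) _) h (by positivity)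
    _ = sgamma f x ^ (k + 1) := Real.rpow_natCast _ _

/-- Uniform bound: `‖f^[m+1](x)/ (m+1)!‖ ≤ ‖f'(x)‖ γ^m` (Hasse-derivative form). -/
lemma hasse_bound [CharZero F] (f : F[X]) (x : F) (hD : f.derivative.eval x ≠ 0) (m : ℕ) :
    ‖(hasseDeriv (m + 1) f).eval x‖ ≤ ‖f.derivative.eval x‖ * sgamma f x ^ m := by
  rcases m with _ | k
  · simp [Polynomial.hasseDeriv_one']
  · have h := hasse_le f x k
    exact (by
      have hD' : (0:ℝ) < ‖f.derivative.eval x‖ := norm_pos_iff.mpr hD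
      rw [norm_div, div_le_iff₀ hD'] at h
      calc ‖(hasseDeriv (k + 1 + 1) f).eval x‖
          ≤ sgamma f x ^ (k + 1) * ‖f.derivative.eval x‖ := h
        _ = ‖f.derivative.eval x‖ * sgamma f x ^ (k + 1) := mul_comm _ _)

/-- Taylor expansion of Hasse derivatives. -/
lemma hasse_taylor (f : F[X]) (m : ℕ) (x t : F) :
    (hasseDeriv m f).eval (x + t) =
      ∑ j ∈ Finset.range (f.natDegree + 1),
        ((j + m).choose j : F) * (hasseDeriv (j + m) f).eval x * t ^ j := by
  have h1 : (hasseDeriv m f).eval (x + t) = (taylor x (hasseDeriv m f)).eval t := by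
    rw [taylor_eval, add_comm]
  have hdeg : (taylor x (hasseDeriv m f)).natDegree < f.natDegree + 1 := by
    rw [natDegree_taylor]
    exact Nat.lt_succ_of_le ((f.natDegree_hasseDeriv_le m).trans (Nat.sub_le _ _))
  rw [h1, Polynomial.eval_eq_sum_range' hdeg]
  refine Finset.sum_congr rfl fun j _ => ?_
  congr 1
  rw [taylor_coeff]
  have h2 : hasseDeriv j (hasseDeriv m f) = (j + m).choose j • hasseDeriv (j + m) f := by
    rw [← LinearMap.comp_apply, Polynomial.hasseDeriv_comp, LinearMap.smul_apply]
  rw [h2]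
  simp [nsmul_eq_mul]

/-- Key estimate: the Hasse derivatives at a nearby point obey the same bounds. -/
lemma hasse_bound_shift [CharZero F] (f : F[X]) (x t : F)
    (hD : f.derivative.eval x ≠ 0)
    (ht : ‖t‖ * sgamma f x ≤ 1) (m : ℕ) :
    ‖(hasseDeriv (m + 1) f).eval (x + t)‖ ≤ ‖f.derivative.eval x‖ * sgamma f x ^ m := by
  rw [hasse_taylor]
  set γ := sgamma f x
  have hγ : 0 ≤ γ := sgamma_nonneg f x
  refine norm_sum_le_of_forall_le_of_nonneg (by positivity) fun j _ => ?_
  calc ‖((j + (m + 1)).choose j : F) * (hasseDeriv (j + (m + 1)) f).eval x * t ^ j‖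
      = ‖((j + (m + 1)).choose j : F)‖ * ‖(hasseDeriv ((j + m) + 1) f).eval x‖ * ‖t‖ ^ j := by
        rw [norm_mul, norm_mul, norm_pow]; ring_nf
    _ ≤ 1 * (‖f.derivative.eval x‖ * γ ^ (j + m)) * ‖t‖ ^ j := by
        refine mul_le_mul (mul_le_mul (norm_natCast_le_one F _)
          (hasse_bound f x hD (j + m)) (norm_nonneg _) zero_le_one)
          le_rfl (by positivity) (by positivity)
    _ = (‖f.derivative.eval x‖ * γ ^ m) * (‖t‖ * γ) ^ j := by
        rw [pow_add, mul_pow]; ring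
    _ ≤ (‖f.derivative.eval x‖ * γ ^ m) * 1 := by
        refine mul_le_mul_of_nonneg_left (pow_le_one₀ (by positivity) ht) (by positivity)
    _ = ‖f.derivative.eval x‖ * γ ^ m := mul_one _

/-- Monotonicity of `sgamma` under a small shift with equal derivative norm. -/
lemma sgamma_le_of_shift [CharZero F] (f : F[X]) (x y : F)
    (hD : f.derivative.eval x ≠ 0)
    (hy : ‖f.derivative.eval y‖ = ‖f.derivative.eval x‖)
    (ht : ‖y - x‖ * sgamma f x ≤ 1) :
    sgamma f y ≤ sgamma f x := by
  rw [sgamma_eq f y]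
  set γ := sgamma f x
  have hγ : 0 ≤ γ := sgamma_nonneg f x
  have hD' : (0:ℝ) < ‖f.derivative.eval x‖ := norm_pos_iff.mpr hD
  refine ciSup_le fun k => ?_
  have hnum : ‖(hasseDeriv (k + 2) f).eval y‖ ≤ ‖f.derivative.eval x‖ * γ ^ (k + 1) := by
    have := hasse_bound_shift f x (y - x) hD ht (k + 1)
    rwa [add_sub_cancel] at this
  have hquot : ‖(hasseDeriv (k + 2) f).eval y / f.derivative.eval y‖ ≤ γ ^ (k + 1) := by
    rw [norm_div, hy, div_le_iff₀ hD', mul_comm]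
    exact hnum
  have hck : ((k : ℝ) + 1) ≠ 0 := by positivity
  calc gterm f y k
      ≤ (γ ^ (k + 1)) ^ ((1 : ℝ) / (k + 1)) :=
        Real.rpow_le_rpow (norm_nonneg _) hquot (by positivity)
    _ = γ := by
        rw [← Real.rpow_natCast γ (k + 1), ← Real.rpow_mul hγ]
        push_cast
        rw [mul_one_div_cancel hck, Real.rpow_one]

/-- The norm of the derivative is unchanged under a small shift. -/
lemma deriv_norm_shift [CharZero F] (f : F[X]) (x t : F)
    (hD : f.derivative.eval x ≠ 0)
    (ht : ‖t‖ * sgamma f x < 1) :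
    ‖f.derivative.eval (x + t)‖ = ‖f.derivative.eval x‖ := by
  set γ := sgamma f x
  have hγ : 0 ≤ γ := sgamma_nonneg f x
  have hD' : (0:ℝ) < ‖f.derivative.eval x‖ := norm_pos_iff.mpr hD
  have hexp : f.derivative.eval (x + t) = f.derivative.eval x +
      ∑ i ∈ Finset.range f.natDegree,
        (((i + 1) + 1).choose (i + 1) : F) * (hasseDeriv ((i + 1) + 1) f).eval x * t ^ (i + 1) := by
    have h := hasse_taylor f 1 x t
    rw [Polynomial.hasseDeriv_one'] at h
    rw [h, Finset.sum_range_succ']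
    simp [Polynomial.hasseDeriv_one', add_comm]
  have hdiff : ‖f.derivative.eval (x + t) - f.derivative.eval x‖
      ≤ ‖f.derivative.eval x‖ * (‖t‖ * γ) := by
    rw [hexp, add_sub_cancel_left]
    refine norm_sum_le_of_forall_le_of_nonneg (by positivity) fun i _ => ?_
    calc ‖(((i + 1) + 1).choose (i + 1) : F) * (hasseDeriv ((i + 1) + 1) f).eval x * t ^ (i + 1)‖
        = ‖(((i + 1) + 1).choose (i + 1) : F)‖ * ‖(hasseDeriv ((i + 1) + 1) f).eval x‖
            * ‖t‖ ^ (i + 1) := by rw [norm_mul, norm_mul, norm_pow]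
      _ ≤ 1 * (‖f.derivative.eval x‖ * γ ^ (i + 1)) * ‖t‖ ^ (i + 1) := by
          refine mul_le_mul (mul_le_mul (norm_natCast_le_one F _)
            (hasse_bound f x hD (i + 1)) (norm_nonneg _) zero_le_one)
            le_rfl (by positivity) (by positivity)
      _ = ‖f.derivative.eval x‖ * (‖t‖ * γ) ^ (i + 1) := by rw [mul_pow]; ring
      _ ≤ ‖f.derivative.eval x‖ * (‖t‖ * γ) ^ 1 := by
          refine mul_le_mul_of_nonneg_left
            (pow_le_pow_of_le_one (by positivity) ht.le (by omega)) hD'.le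
      _ = ‖f.derivative.eval x‖ * (‖t‖ * γ) := by rw [pow_one]
  have hlt : ‖f.derivative.eval (x + t) - f.derivative.eval x‖ < ‖f.derivative.eval x‖ := by
    refine hdiff.trans_lt ?_
    calc ‖f.derivative.eval x‖ * (‖t‖ * γ) < ‖f.derivative.eval x‖ * 1 :=
          mul_lt_mul_of_pos_left ht hD'
      _ = ‖f.derivative.eval x‖ := mul_one _
  have h2 : ‖f.derivative.eval x‖ ≠ ‖f.derivative.eval (x + t) - f.derivative.eval x‖ :=
    (ne_of_lt hlt).symm
  calc ‖f.derivative.eval (x + t)‖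
      = ‖f.derivative.eval x + (f.derivative.eval (x + t) - f.derivative.eval x)‖ := by ring_nf
    _ = max ‖f.derivative.eval x‖ ‖f.derivative.eval (x + t) - f.derivative.eval x‖ :=
        norm_add_eq_max_of_norm_ne_norm h2
    _ = ‖f.derivative.eval x‖ := max_eq_left hlt.le

end Aux

/-- One Newton step: if `α(f,x) < 1` then `f'(x') ≠ 0`,
`β(f,x') ≤ α(f,x)β(f,x)`, `γ(f,x') = γ(f,x)`, hence `α(f,x') ≤ α(f,x)^2`. -/
theorem ultrametric_newton_step
    {F : Type*} [NormedField F] [IsUltrametricDist F] [CompleteSpace F] [CharZero F]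
    (f : F[X]) (x : F) (hx : f.derivative.eval x ≠ 0)
    (hα : salpha f x < 1) :
    f.derivative.eval (newton f x) ≠ 0 ∧
      sbeta f (newton f x) ≤ salpha f x * sbeta f x ∧
      sgamma f (newton f x) = sgamma f x ∧
      salpha f (newton f x) ≤ salpha f x ^ 2 := by
  classical
  set D := f.derivative.eval x with hDdef
  set β := sbeta f x with hβdef
  set γ := sgamma f x with hγdef
  have hD' : (0:ℝ) < ‖D‖ := norm_pos_iff.mpr hx
  have hβ : 0 ≤ β := norm_nonneg _
  have hγ0 : 0 ≤ γ := sgamma_nonneg f x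
  set t : F := -(f.eval x / D) with htdef
  have hxt : newton f x = x + t := by rw [newton]; ring
  have hnt : ‖t‖ = β := by rw [htdef, norm_neg]; rfl
  have hαβγ : salpha f x = β * γ := rfl
  have hβγlt : β * γ < 1 := hα
  have hβγle : β * γ ≤ 1 := hβγlt.le
  have htγlt : ‖t‖ * γ < 1 := by rwa [hnt]
  -- derivative norm preserved
  have hDeq : ‖f.derivative.eval (newton f x)‖ = ‖D‖ := by
    rw [hxt]; exact deriv_norm_shift f x t hx htγlt
  have hDne : f.derivative.eval (newton f x) ≠ 0 := by
    intro h
    rw [h, norm_zero] at hDeq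
    exact hD'.ne' hDeq.symm
  -- gamma equality
  have hγle : sgamma f (newton f x) ≤ γ := by
    refine sgamma_le_of_shift f x (newton f x) hx hDeq ?_
    have : newton f x - x = t := by rw [hxt]; ring
    rw [this, hnt]; exact hβγle
  have hγge : γ ≤ sgamma f (newton f x) := by
    refine sgamma_le_of_shift f (newton f x) x hDne hDeq.symm ?_
    have h1 : ‖x - newton f x‖ = β := by
      rw [show x - newton f x = -t by rw [hxt]; ring, norm_neg, hnt]
    rw [h1]
    calc β * sgamma f (newton f x) ≤ β * γ := mul_le_mul_of_nonneg_left hγle hβ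
      _ ≤ 1 := hβγle
  have hγeq : sgamma f (newton f x) = γ := le_antisymm hγle hγge
  -- beta bound
  have hN : 1 ≤ f.natDegree := by
    rcases Nat.eq_zero_or_pos f.natDegree with h0 | h1
    · exfalso
      apply hx
      show f.derivative.eval x = 0
      rw [Polynomial.eq_C_of_natDegree_eq_zero h0]
      simp
    · exact h1
  have hfval : f.eval (newton f x) =
      ∑ i ∈ Finset.range (f.natDegree - 1),
        (hasseDeriv ((i + 1) + 1) f).eval x * t ^ ((i + 1) + 1) := by
    have h := hasse_taylor f 0 x t
    rw [Polynomial.hasseDeriv_zero'] at h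
    obtain ⟨N, hNd⟩ : ∃ N, f.natDegree = N + 1 := ⟨f.natDegree - 1, by omega⟩
    rw [hxt, h, hNd]
    rw [Finset.sum_range_succ', Finset.sum_range_succ']
    have h0 : ((0 + 0).choose 0 : F) * (hasseDeriv (0 + 0) f).eval x * t ^ 0 = f.eval x := by
      simp [Polynomial.hasseDeriv_zero']
    have h1 : ((0 + 1 + 0).choose (0 + 1) : F) * (hasseDeriv (0 + 1 + 0) f).eval x * t ^ (0 + 1)
        = -f.eval x := by
      simp only [Nat.add_zero, Nat.zero_add, Nat.choose_self, Nat.cast_one, one_mul, pow_one]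
      rw [Polynomial.hasseDeriv_one', htdef]
      field_simp
      rw [hDdef]
      ring
    rw [h0, h1]
    have : N + 1 - 1 = N := by omega
    rw [this]
    have hsum : ∀ i ∈ Finset.range N,
        ((i + 1 + 1 + 0).choose (i + 1 + 1) : F) * (hasseDeriv (i + 1 + 1 + 0) f).eval x
          * t ^ (i + 1 + 1) = (hasseDeriv ((i + 1) + 1) f).eval x * t ^ ((i + 1) + 1) := by
      intro i _
      simp
    rw [Finset.sum_congr rfl hsum]
    ring
  have hfnorm : ‖f.eval (newton f x)‖ ≤ ‖D‖ * ((β * γ) * β) := by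
    rw [hfval]
    refine IsUltrametricDist.norm_sum_le_of_forall_le_of_nonneg (by positivity) fun i _ => ?_
    calc ‖(hasseDeriv ((i + 1) + 1) f).eval x * t ^ ((i + 1) + 1)‖
        = ‖(hasseDeriv ((i + 1) + 1) f).eval x‖ * ‖t‖ ^ ((i + 1) + 1) := by
          rw [norm_mul, norm_pow]
      _ ≤ (‖D‖ * γ ^ (i + 1)) * ‖t‖ ^ ((i + 1) + 1) := by
          refine mul_le_mul_of_nonneg_right (hasse_bound f x hx (i + 1)) (by positivity)
      _ = ‖D‖ * ((β * γ) ^ (i + 1) * β) := by rw [hnt, mul_pow, pow_succ]; ring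
      _ ≤ ‖D‖ * ((β * γ) ^ 1 * β) := by
          refine mul_le_mul_of_nonneg_left
            (mul_le_mul_of_nonneg_right
              (pow_le_pow_of_le_one (by positivity) hβγle (by omega)) hβ) hD'.le
      _ = ‖D‖ * ((β * γ) * β) := by rw [pow_one]
  have hβ' : sbeta f (newton f x) ≤ salpha f x * β := by
    rw [sbeta, norm_div, hDeq, div_le_iff₀ hD', hαβγ]
    calc ‖f.eval (newton f x)‖ ≤ ‖D‖ * ((β * γ) * β) := hfnorm
      _ = β * γ * β * ‖D‖ := by ring
  refine ⟨hDne, hβ', hγeq, ?_⟩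
  have hβ'nonneg : 0 ≤ sbeta f (newton f x) := norm_nonneg _
  calc salpha f (newton f x) = sbeta f (newton f x) * sgamma f (newton f x) := rfl
    _ = sbeta f (newton f x) * γ := by rw [hγeq]
    _ ≤ (salpha f x * β) * γ := mul_le_mul_of_nonneg_right hβ' hγ0
    _ = salpha f x * (β * γ) := by ring
    _ = salpha f x * salpha f x := by rw [← hαβγ]
    _ = salpha f x ^ 2 := (sq _).symm
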